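/- Let X_n = (X_{i,n})_{i=1}^n be i.i.d. ℝ^d-valued random vectors under each P ∈ 𝒫_n, and suppose there exist numbers c_L < c_U, ε > 0, and a coordinate j ∈ {1,…,d} such that for all P ∈ 𝒫_n, inf_{x∈[c_L,c_U]} f_{j,P}(x) > ε, where f_{j,P} : ℝ → [0,∞) is a measurable function satisfying P{X_{ij,n} ∈ [c_L,c_U] ∩ A} = ∫_{[c_L,c_U]∩A} f_{j,P}(x)dx for every Borel A ⊂ ℝ (i.e., the restriction of the law of the j-th coordinate X_{ij,n} to [c_L,c_U] has density f_{j,P} bounded below by ε). Then for any R > 0 there exists c_R > 0 such that for all n ≥ 1 and all P ∈ 𝒫_n: c_R ≤ sup_{t∈ℝ^d:‖t‖>R} (1/(2π²)) E_P[inf_{q∈ℤ}(t'(X_{1,n}−X_{2,n})−2πq)²]. -/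

import Mathlib

/-! Take the frequency `t = τ eⱼ` with `τ > R` and `τ (c_U - c_L) ≥ 3π`. For every `x`, the phases
`τ (x - y)`, `y ∈ [c_L, c_U]`, sweep an interval of length `≥ 3π`, so some subinterval of
`[c_L, c_U]` of length `π / τ` keeps them at distance `≥ π/2` from `2πℤ`. As the `j`-th coordinate
has density `≥ ε` on `[c_L, c_U]`, the event `ξ(X₁, X₂; t) ≥ π²/4` has probability at least
`ε (c_U - c_L) · ε π / τ`, and Markov's inequality gives a lower bound on `E ξ` that does not
depend on `P`. -/

open MeasureTheory ProbabilityTheory Real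
open scoped BigOperators ENNReal NNReal

noncomputable section

/-- Euclidean space ℝ^d. -/
abbrev Ed (d : ℕ) := EuclideanSpace ℝ (Fin d)

variable {d : ℕ}

/-- The characteristic function of a (Borel) measure on ℝ^d. -/
def charFn (μ : Measure (Ed d)) (t : Ed d) : ℂ :=
  ∫ x, Complex.exp (((inner ℝ t x : ℝ) : ℂ) * Complex.I) ∂μ

/-- Partial derivative in the k-th coordinate direction. -/
def partialD {F : Type*} [NormedAddCommGroup F] [NormedSpace ℝ F]
    (k : Fin d) (f : Ed d → F) : Ed d → F :=
  fun x => fderiv ℝ f x (EuclideanSpace.single k 1)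

/-- Iterated partial derivative `D^ν` for a multi-index ν. -/
def mDeriv {F : Type*} [NormedAddCommGroup F] [NormedSpace ℝ F]
    (ν : Fin d → ℕ) (f : Ed d → F) : Ed d → F :=
  (List.finRange d).foldr (fun k g => (partialD k)^[ν k] g) f

/-- The ν-th cumulant of a measure μ on ℝ^d:
`κ_ν = (−i)^{|ν|} D^ν (log φ_μ)(0)` where φ_μ is the characteristic function. -/
def cumulant (μ : Measure (Ed d)) (ν : Fin d → ℕ) : ℂ :=
  (-Complex.I) ^ (∑ k, ν k) * mDeriv ν (fun t => Complex.log (charFn μ t)) 0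

/-- The finite set of multi-indices ν ∈ ℤ₊^d with |ν| = j. -/
def multiIdx (d j : ℕ) : Finset (Fin d → ℕ) :=
  (Fintype.piFinset fun _ : Fin d => Finset.range (j + 1)).filter fun ν => ∑ k, ν k = j

/-- The differential operator `χ̄_j(−D)` applied to f, where
`χ̄_j(z) = j! Σ_{|ν|=j} (χ_ν/ν!) z^ν`. -/
def chiOpApply (χ : (Fin d → ℕ) → ℂ) (j : ℕ) (f : Ed d → ℂ) : Ed d → ℂ :=
  fun x => (j.factorial : ℂ) * (-1 : ℂ) ^ j *
    ∑ ν ∈ multiIdx d j, (χ ν / ∏ k, ((ν k).factorial : ℂ)) * mDeriv ν f x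

/-- The Edgeworth polynomial operator `P̃_j(−D; {χ_ν})` applied to f:
`P̃_j = Σ_{m=1}^{j} (1/m!) Σ*_{j_1+⋯+j_m=j} ∏_k χ̄_{j_k+2}(−D)/(j_k+2)!`,
encoded as a sum over compositions of j. -/
def edgeworthOp (χ : (Fin d → ℕ) → ℂ) (j : ℕ) (f : Ed d → ℂ) : Ed d → ℂ :=
  fun x => ∑ c : Composition j, ((c.length.factorial : ℂ))⁻¹ *
    (c.blocks.foldr
      (fun jk g => fun y => (((jk + 2).factorial : ℂ))⁻¹ * chiOpApply χ (jk + 2) g y) f) x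

/-- The standard normal density on ℝ^d. -/
def gaussDensity (d : ℕ) (x : Ed d) : ℝ :=
  (2 * π) ^ (-(d : ℝ) / 2) * Real.exp (-‖x‖ ^ 2 / 2)

/-- The density of the order-s Edgeworth signed measure
`Σ_{j=0}^{s−2} n^{−j/2} P̃_j(−D;{χ_ν}) φ(x)`. -/
def edgeworthDensity (χ : (Fin d → ℕ) → ℂ) (n s : ℕ) (x : Ed d) : ℝ :=
  (∑ j ∈ Finset.range (s - 1), (((n : ℝ) ^ (-(j : ℝ) / 2) : ℝ) : ℂ) *
    edgeworthOp χ j (fun y => ((gaussDensity d y : ℝ) : ℂ)) x).re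

/-- The order-s Edgeworth signed measure, as a set function `A ↦ ∫_A (density)`. -/
def edgeworthSM (χ : (Fin d → ℕ) → ℂ) (n s : ℕ) (A : Set (Ed d)) : ℝ :=
  ∫ x in A, edgeworthDensity χ n s x

/-- The standard normal distribution Φ = N(0, I_d) on ℝ^d. -/
def stdGaussian (d : ℕ) : Measure (Ed d) :=
  volume.withDensity fun x => ENNReal.ofReal (gaussDensity d x)

/-- Modulus of continuity `ω_f(x;ε) = sup {|f z − f y| : z,y ∈ B(x;ε)}`. -/
def oscil (f : Ed d → ℝ) (x : Ed d) (ε : ℝ) : ℝ :=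
  sSup {r | ∃ z ∈ Metric.ball x ε, ∃ y ∈ Metric.ball x ε, r = |f z - f y|}

/-- Averaged modulus of continuity `ω̄_f(ε;μ) = ∫ ω_f(x;ε) dμ(x)`. -/
def oscilBar (f : Ed d → ℝ) (ε : ℝ) (μ : Measure (Ed d)) : ℝ :=
  ∫ x, oscil f x ε ∂μ

/-- `M_s(f) = sup_x |f(x)|/(1+‖x‖^s)`. -/
def Msup (s : ℕ) (f : Ed d → ℝ) : ℝ := ⨆ x : Ed d, |f x| / (1 + ‖x‖ ^ s)

/-- The (uncentered) second-moment matrix `E[X X']` of a measure on ℝ^d. -/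
def covMat (μ : Measure (Ed d)) : Matrix (Fin d) (Fin d) ℝ :=
  Matrix.of fun k l => ∫ x, x k * x l ∂μ

/-- The old `Matrix.PosSemidef.sqrt` (removed from Mathlib), with its old definition. -/
def psdSqrt {M : Matrix (Fin d) (Fin d) ℝ} (hM : M.PosSemidef) : Matrix (Fin d) (Fin d) ℝ :=
  (hM.1.eigenvectorUnitary : Matrix (Fin d) (Fin d) ℝ) *
    Matrix.diagonal ((↑) ∘ Real.sqrt ∘ hM.1.eigenvalues) *
    (star hM.1.eigenvectorUnitary : Matrix (Fin d) (Fin d) ℝ)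

open Classical in
/-- Inverse square root of a matrix (junk value if not positive semidefinite). -/
def matInvSqrt (M : Matrix (Fin d) (Fin d) ℝ) : Matrix (Fin d) (Fin d) ℝ :=
  if h : M.PosSemidef then (psdSqrt h)⁻¹ else 1

open Classical in
/-- Square root of a matrix (junk value if not positive semidefinite). -/
def matSqrt (M : Matrix (Fin d) (Fin d) ℝ) : Matrix (Fin d) (Fin d) ℝ :=
  if h : M.PosSemidef then psdSqrt h else 1

/-- Matrix-vector multiplication on Euclidean space. -/
def mulVecE (M : Matrix (Fin d) (Fin d) ℝ) (x : Ed d) : Ed d :=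
  (EuclideanSpace.equiv (Fin d) ℝ).symm (M.mulVec (EuclideanSpace.equiv (Fin d) ℝ x))

/-- Marginal distribution of the i-th coordinate. -/
def marginal {n : ℕ} (P : Measure (Fin n → Ed d)) (i : Fin n) : Measure (Ed d) :=
  P.map fun ω => ω i

/-- `V_{n,P} = (1/n) Σ_i Var_P(X_{i,n})` (for mean-zero coordinates). -/
def Vmat {d : ℕ} (n : ℕ) (P : Measure (Fin n → Ed d)) : Matrix (Fin d) (Fin d) ℝ :=
  (n : ℝ)⁻¹ • ∑ i : Fin n, covMat (marginal P i)

/-- `Q_{n,P}`, the distribution of `n^{−1/2} Σ_i V_{n,P}^{−1/2} X_{i,n}`. -/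
def Qmeas {d : ℕ} (n : ℕ) (P : Measure (Fin n → Ed d)) : Measure (Ed d) :=
  P.map fun ω => (Real.sqrt n)⁻¹ • ∑ i, mulVecE (matInvSqrt (Vmat n P)) (ω i)

/-- `χ̄_{ν,P}`, the average over i of the ν-th cumulant of `V_{n,P}^{−1/2} X_{i,n}`. -/
def chiBar {d : ℕ} (n : ℕ) (P : Measure (Fin n → Ed d)) (ν : Fin d → ℕ) : ℂ :=
  (n : ℂ)⁻¹ * ∑ i : Fin n, cumulant ((marginal P i).map (mulVecE (matInvSqrt (Vmat n P)))) ν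

/-- `ρ_{n,s,P} = (1/n) Σ_i E_P ‖X_{i,n}‖^s`. -/
def rhoM {d : ℕ} (n s : ℕ) (P : Measure (Fin n → Ed d)) : ℝ :=
  (n : ℝ)⁻¹ * ∑ i : Fin n, ∫ ω, ‖ω i‖ ^ s ∂P

/-- The mean weak Cramér condition with parameter (b,c,R) for a collection of
joint distributions of (X_{i,n})_{i=1}^n. -/
def meanWeakCramer {d : ℕ} {n : ℕ} (Ps : Set (Measure (Fin n → Ed d))) (b c R : ℝ) : Prop :=
  ∀ P ∈ Ps, ∀ t : Ed d, R < ‖t‖ →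
    (n : ℝ)⁻¹ * ∑ i : Fin n, ‖charFn (marginal P i) t‖ ≤ 1 - c / ‖t‖ ^ b

/-- The weak Cramér condition with parameter (b,c,R) for a single distribution. -/
def weakCramerMeas (μ : Measure (Ed d)) (b c R : ℝ) : Prop :=
  ∀ t : Ed d, R < ‖t‖ → ‖charFn μ t‖ ≤ 1 - c / ‖t‖ ^ b

/-- The empirical (resampling) measure `(1/n) Σ_j δ_{x_j}`. -/
def empMeas {d n : ℕ} (x : Fin n → Ed d) : Measure (Ed d) :=
  ((n : ℝ≥0∞))⁻¹ • ∑ i : Fin n, Measure.dirac (x i)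

/-- Sample mean. -/
def sMean {d n : ℕ} (x : Fin n → Ed d) : Ed d := (n : ℝ)⁻¹ • ∑ i, x i

/-- Sample covariance matrix `V̂_n`. -/
def Vhat {d n : ℕ} (x : Fin n → Ed d) : Matrix (Fin d) (Fin d) ℝ :=
  (n : ℝ)⁻¹ • ∑ i : Fin n, Matrix.of fun k l => (x i k - sMean x k) * (x i l - sMean x l)

/-- The bootstrap distribution `Q_{n,ℱ_n}`: the conditional distribution, given the
sample x, of `√n V̂_n^{−1/2}(X̄* − X̄)` where `X̄*` is the mean of n i.i.d. draws from
the empirical measure of x. -/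
def bootQ {d n : ℕ} (x : Fin n → Ed d) : Measure (Ed d) :=
  (Measure.pi fun _ : Fin n => empMeas x).map
    fun y => Real.sqrt n • mulVecE (matInvSqrt (Vhat x)) (sMean y - sMean x)

/-- `χ*_ν`, the ν-th cumulant of the conditional distribution of a bootstrap draw
given the sample, i.e. of the empirical measure. -/
def bootChi {d n : ℕ} (x : Fin n → Ed d) (ν : Fin d → ℕ) : ℂ := cumulant (empMeas x) ν

/-- `Q̃_{n,ℱ_n}`, the Edgeworth signed measure built from the bootstrap cumulants. -/
def bootQtilde {d n : ℕ} (s : ℕ) (x : Fin n → Ed d) (A : Set (Ed d)) : ℝ :=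
  edgeworthSM (bootChi x) n s A

/-- Event `ℰ_{n,0}(ρ̄) = {(1/n) Σ ‖X_i‖^s ≤ ρ̄}`. -/
def Ev0 {d : ℕ} (n s : ℕ) (ρ : ℝ) : Set (Fin n → Ed d) :=
  {x | (n : ℝ)⁻¹ * ∑ i, ‖x i‖ ^ s ≤ ρ}

/-- Event `ℰ_{n,1}(c₁) = {smallest eigenvalue of V̂_n ≥ c₁}` (via the quadratic form). -/
def Ev1 {d : ℕ} (n : ℕ) (c₁ : ℝ) : Set (Fin n → Ed d) :=
  {x | ∀ v : Ed d, c₁ * ‖v‖ ^ 2 ≤ (inner ℝ v (mulVecE (Vhat x) v) : ℝ)}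

/-- Event `ℰ_{n,2}(c₂)`: all mixed absolute moments of the sample of order ≤ s are ≤ c₂. -/
def Ev2 {d : ℕ} (n s : ℕ) (c₂ : ℝ) : Set (Fin n → Ed d) :=
  {x | ∀ v : Fin d → ℕ, (∑ k, v k) ≤ s → (n : ℝ)⁻¹ * ∑ i, ∏ k, |x i k| ^ (v k) ≤ c₂}

/-- `ξ(u,v;t) = inf_{q∈ℤ} (t'(u−v) − 2πq)²`. -/
def xiFn {d : ℕ} (t u v : Ed d) : ℝ := ⨅ q : ℤ, ((inner ℝ t (u - v) : ℝ) - 2 * π * (q : ℝ)) ^ 2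

/-- Condition (★): `c_R ≤ sup_{‖t‖>R} (1/(2π²)) E_P[inf_q (t'(X₁−X₂) − 2πq)²]`
for X₁, X₂ i.i.d. with distribution P. -/
def condStar {d : ℕ} (P : Measure (Ed d)) (R cR : ℝ) : Prop :=
  cR ≤ ⨆ t : {t : Ed d // R < ‖t‖},
    (2 * π ^ 2)⁻¹ * ∫ p : Ed d × Ed d, xiFn t.1 p.1 p.2 ∂(P.prod P)

def phaseDistSq (θ : ℝ) : ℝ := ⨅ q : ℤ, (θ - 2 * π * q) ^ 2

lemma phaseDistSq_nonneg (θ : ℝ) : 0 ≤ phaseDistSq θ :=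
  Real.iInf_nonneg fun _ => sq_nonneg _

lemma phaseDistSq_le_pi_sq (θ : ℝ) : phaseDistSq θ ≤ π ^ 2 := by
  have hbdd : BddBelow (Set.range fun q : ℤ => (θ - 2 * π * q) ^ 2) :=
    ⟨0, by rintro _ ⟨q, rfl⟩; exact sq_nonneg _⟩
  have hround : |θ - 2 * π * round (θ / (2 * π))| ≤ π := by
    have h := abs_sub_round (θ / (2 * π))
    have hscale : θ - 2 * π * round (θ / (2 * π)) =
        2 * π * (θ / (2 * π) - round (θ / (2 * π))) := by
      field_simp
    rw [hscale, abs_mul, abs_of_pos (by positivity)]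
    nlinarith [pi_pos]
  calc phaseDistSq θ ≤ (θ - 2 * π * round (θ / (2 * π))) ^ 2 := ciInf_le hbdd _
    _ ≤ π ^ 2 := sq_le_sq' (abs_le.mp hround).1 (abs_le.mp hround).2

lemma pi_sq_div_four_le_phaseDistSq {θ : ℝ} {m : ℤ} (hlo : π / 2 ≤ θ - 2 * π * m)
    (hhi : θ - 2 * π * m ≤ 3 * π / 2) : π ^ 2 / 4 ≤ phaseDistSq θ := by
  refine le_ciInf fun q => ?_
  have hfar : π / 2 ≤ |θ - 2 * π * q| := by
    rcases le_or_gt q m with hq | hq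
    · have : (q : ℝ) ≤ m := by exact_mod_cast hq
      exact le_abs.mpr (Or.inl (by nlinarith [pi_pos]))
    · have : (m : ℝ) + 1 ≤ q := by exact_mod_cast hq
      exact le_abs.mpr (Or.inr (by nlinarith [pi_pos]))
  calc π ^ 2 / 4 = (π / 2) ^ 2 := by ring
    _ ≤ |θ - 2 * π * q| ^ 2 := pow_le_pow_left₀ (by positivity) hfar 2
    _ = (θ - 2 * π * q) ^ 2 := sq_abs _

/-- As `y` runs over `[a, b]`, the phase `τ (x - y)` sweeps an interval of length at least `3π`,
which contains a whole window `[2πm + π/2, 2πm + 3π/2]` of phases far from `2πℤ`. -/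
lemma exists_Icc_subset_pi_sq_div_four_le_phaseDistSq {a b τ : ℝ} (hτ : 0 < τ)
    (hgap : 3 * π ≤ τ * (b - a)) (x : ℝ) :
    ∃ c, Set.Icc c (c + π / τ) ⊆ Set.Icc a b ∧
      ∀ y ∈ Set.Icc c (c + π / τ), π ^ 2 / 4 ≤ phaseDistSq (τ * (x - y)) := by
  set m : ℤ := ⌈(τ * (x - b) - π / 2) / (2 * π)⌉
  have hm_ge : τ * (x - b) ≤ 2 * π * m + π / 2 := by
    have := (div_le_iff₀ (by positivity)).mp (Int.le_ceil ((τ * (x - b) - π / 2) / (2 * π)))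
    linarith
  have hm_lt : 2 * π * m + π / 2 < τ * (x - b) + 2 * π := by
    have := (lt_div_iff₀ (by positivity)).mp
      (sub_lt_iff_lt_add.mpr (Int.ceil_lt_add_one ((τ * (x - b) - π / 2) / (2 * π))))
    linarith
  set c := x - (2 * π * m + 3 * π / 2) / τ
  have hwindow : ∀ y ∈ Set.Icc c (c + π / τ),
      2 * π * m + π / 2 ≤ τ * (x - y) ∧ τ * (x - y) ≤ 2 * π * m + 3 * π / 2 := by
    rintro y ⟨hy1, hy2⟩
    have hend : c + π / τ = x - (2 * π * m + π / 2) / τ := by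
      simp only [c]; field_simp; ring
    rw [hend] at hy2
    have h1 : x - y ≤ (2 * π * m + 3 * π / 2) / τ := by linarith
    have h2 : (2 * π * m + π / 2) / τ ≤ x - y := by linarith
    rw [le_div_iff₀ hτ] at h1
    rw [div_le_iff₀ hτ] at h2
    constructor <;> linarith
  refine ⟨c, fun y hy => ?_, fun y hy => ?_⟩ <;> obtain ⟨hlo, hhi⟩ := hwindow y hy
  · constructor <;> nlinarith
  · exact pi_sq_div_four_le_phaseDistSq (m := m) (by linarith) (by linarith)

/-- The identity in `hdens` forces nothing when `f` fails to be integrable (the Bochner integral is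
then `0`), so the bound is obtained on the sublevel sets `{f ≤ M}`, where `f` is bounded, and then
passed to the limit `M → ∞`. -/
lemma ofReal_mul_volume_le_of_density {Ω : Type*} [MeasurableSpace Ω] (μ : Measure Ω)
    [IsFiniteMeasure μ] (X : Ω → ℝ) {I : Set ℝ} (hI : volume I ≠ ∞) {f : ℝ → ℝ} {ε : ℝ}
    (hf : Measurable f)
    (hdens : ∀ A : Set ℝ, MeasurableSet A → (μ (X ⁻¹' (I ∩ A))).toReal = ∫ y in I ∩ A, f y)
    (hfε : ∀ y ∈ I, ε ≤ f y) {S : Set ℝ} (hS : MeasurableSet S) (hSI : S ⊆ I) :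
    ENNReal.ofReal ε * volume S ≤ μ (X ⁻¹' S) := by
  rcases le_or_gt ε 0 with hε | hε
  · simp [ENNReal.ofReal_of_nonpos hε]
  have hsub : ∀ M : ℕ, ENNReal.ofReal ε * volume (S ∩ {y | f y ≤ M}) ≤ μ (X ⁻¹' S) := by
    intro M
    set B := S ∩ {y | f y ≤ M}
    have hB : MeasurableSet B := hS.inter (measurableSet_le hf measurable_const)
    have hBI : B ⊆ I := fun y hy => hSI hy.1
    have hBfin : volume B ≠ ∞ := (measure_mono hBI).trans_lt hI.lt_top |>.ne
    have hfint : IntegrableOn f B := by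
      refine Measure.integrableOn_of_bounded (M := M) hBfin hf.aestronglyMeasurable ?_
      filter_upwards [ae_restrict_mem hB] with y hy
      rw [Real.norm_eq_abs, abs_of_nonneg (hε.le.trans (hfε y (hBI hy)))]
      exact hy.2
    have hreal : ε * (volume B).toReal ≤ (μ (X ⁻¹' B)).toReal := by
      rw [← Set.inter_eq_right.mpr hBI, hdens B hB, Set.inter_eq_right.mpr hBI]
      calc ε * (volume B).toReal = ∫ _ in B, ε := by
            rw [setIntegral_const, smul_eq_mul, mul_comm, Measure.real]
        _ ≤ ∫ y in B, f y :=
            setIntegral_mono_on (integrableOn_const hBfin) hfint hB fun y hy => hfε y (hBI hy)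
    calc ENNReal.ofReal ε * volume B = ENNReal.ofReal (ε * (volume B).toReal) := by
          rw [ENNReal.ofReal_mul hε.le, ENNReal.ofReal_toReal hBfin]
      _ ≤ μ (X ⁻¹' B) := (ENNReal.ofReal_le_iff_le_toReal (measure_ne_top _ _)).mpr hreal
      _ ≤ μ (X ⁻¹' S) := measure_mono fun ω hω => hω.1
  have hmono : Monotone fun M : ℕ => S ∩ {y | f y ≤ M} := fun M N hMN =>
    Set.inter_subset_inter_right _ fun y (hy : f y ≤ M) => hy.trans (Nat.cast_le.mpr hMN)
  have hunion : ⋃ M : ℕ, S ∩ {y | f y ≤ M} = S := by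
    refine (Set.iUnion_subset fun _ => Set.inter_subset_left).antisymm fun y hy => ?_
    obtain ⟨M, hM⟩ := exists_nat_ge (f y)
    exact Set.mem_iUnion.mpr ⟨M, hy, hM⟩
  nth_rewrite 1 [← hunion]
  rw [hmono.measure_iUnion, ENNReal.mul_iSup]
  exact iSup_le hsub

lemma mul_le_prod_apply_of_forall_le {α β : Type*} [MeasurableSpace α] [MeasurableSpace β]
    (μ : Measure α) (ν : Measure β) [SFinite ν] {T : Set (α × β)} (hT : MeasurableSet T)
    {B : Set α} {c : ℝ≥0∞} (h : ∀ u ∈ B, c ≤ ν (Prod.mk u ⁻¹' T)) :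
    c * μ B ≤ μ.prod ν T := by
  rw [Measure.prod_apply hT]
  calc c * μ B = ∫⁻ _ in B, c ∂μ := (setLIntegral_const _ _).symm
    _ ≤ ∫⁻ u in B, ν (Prod.mk u ⁻¹' T) ∂μ := setLIntegral_mono (measurable_measure_prodMk_left hT) h
    _ ≤ ∫⁻ u, ν (Prod.mk u ⁻¹' T) ∂μ := setLIntegral_le_lintegral _ _

lemma xiFn_eq_phaseDistSq (t u v : Ed d) : xiFn t u v = phaseDistSq (inner ℝ t (u - v)) := rfl

lemma measurable_xiFn (t : Ed d) : Measurable fun p : Ed d × Ed d => xiFn t p.1 p.2 :=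
  Measurable.iInf fun _ =>
    (((continuous_const.inner (continuous_fst.sub continuous_snd)).sub
      continuous_const).pow 2).measurable

lemma norm_xiFn_le (t u v : Ed d) : ‖xiFn t u v‖ ≤ π ^ 2 := by
  rw [Real.norm_eq_abs, xiFn_eq_phaseDistSq, abs_of_nonneg (phaseDistSq_nonneg _)]
  exact phaseDistSq_le_pi_sq _

lemma integrable_xiFn (t : Ed d) (μ : Measure (Ed d × Ed d)) [IsFiniteMeasure μ] :
    Integrable (fun p => xiFn t p.1 p.2) μ :=
  Integrable.of_bound (measurable_xiFn t).aestronglyMeasurable (π ^ 2) <|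
    ae_of_all _ fun p => norm_xiFn_le t p.1 p.2

lemma condStar_of_le_integral_xiFn (P : Measure (Ed d)) [IsFiniteMeasure P] {R cR : ℝ}
    {t : Ed d} (ht : R < ‖t‖)
    (hcR : cR ≤ (2 * π ^ 2)⁻¹ * ∫ p : Ed d × Ed d, xiFn t p.1 p.2 ∂(P.prod P)) :
    condStar P R cR := by
  have hbdd : BddAbove (Set.range fun s : {s : Ed d // R < ‖s‖} =>
      (2 * π ^ 2)⁻¹ * ∫ p : Ed d × Ed d, xiFn s.1 p.1 p.2 ∂(P.prod P)) := by
    refine ⟨(2 * π ^ 2)⁻¹ * (π ^ 2 * (P.prod P).real Set.univ), ?_⟩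
    rintro _ ⟨s, rfl⟩
    have h := norm_integral_le_of_norm_le_const (μ := P.prod P)
      (ae_of_all _ fun p => norm_xiFn_le s.1 p.1 p.2)
    rw [Real.norm_eq_abs] at h
    exact mul_le_mul_of_nonneg_left ((le_abs_self _).trans h) (by positivity)
  exact hcR.trans (le_ciSup hbdd ⟨t, ht⟩)

lemma le_integral_xiFn_single (P : Measure (Ed d)) [IsFiniteMeasure P] {j : Fin d}
    {a b ε τ : ℝ} (hε : 0 ≤ ε) (hτ : 0 < τ) (hgap : 3 * π ≤ τ * (b - a))
    (hP : ∀ S ⊆ Set.Icc a b, MeasurableSet S → ENNReal.ofReal ε * volume S ≤ P {x | x j ∈ S}) :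
    π ^ 2 / 4 * (ε * (π / τ) * (ε * (b - a))) ≤
      ∫ p : Ed d × Ed d, xiFn (EuclideanSpace.single j τ) p.1 p.2 ∂(P.prod P) := by
  set t : Ed d := EuclideanSpace.single j τ
  have hphase : ∀ u v : Ed d, xiFn t u v = phaseDistSq (τ * (u j - v j)) := by
    intro u v
    rw [xiFn_eq_phaseDistSq, EuclideanSpace.inner_single_left]
    simp
  set T := {p : Ed d × Ed d | π ^ 2 / 4 ≤ xiFn t p.1 p.2}
  have hT : MeasurableSet T := measurableSet_le measurable_const (measurable_xiFn t)
  have hsection : ∀ u ∈ {u : Ed d | u j ∈ Set.Icc a b},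
      ENNReal.ofReal ε * ENNReal.ofReal (π / τ) ≤ P (Prod.mk u ⁻¹' T) := by
    intro u _
    obtain ⟨c, hcI, hc⟩ := exists_Icc_subset_pi_sq_div_four_le_phaseDistSq hτ hgap (u j)
    calc ENNReal.ofReal ε * ENNReal.ofReal (π / τ)
        = ENNReal.ofReal ε * volume (Set.Icc c (c + π / τ)) := by
          rw [Real.volume_Icc, add_sub_cancel_left]
      _ ≤ P {v | v j ∈ Set.Icc c (c + π / τ)} := hP _ hcI measurableSet_Icc
      _ ≤ P (Prod.mk u ⁻¹' T) := measure_mono fun v hv => (hc (v j) hv).trans_eq (hphase u v).symm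
  have hPT : ENNReal.ofReal (ε * (π / τ) * (ε * (b - a))) ≤ P.prod P T := by
    rw [ENNReal.ofReal_mul (by positivity), ENNReal.ofReal_mul hε, ENNReal.ofReal_mul hε]
    calc _ ≤ ENNReal.ofReal ε * ENNReal.ofReal (π / τ) * P {u | u j ∈ Set.Icc a b} := by
          gcongr
          simpa [Real.volume_Icc] using hP _ subset_rfl measurableSet_Icc
      _ ≤ P.prod P T := mul_le_prod_apply_of_forall_le P P hT hsection
  calc π ^ 2 / 4 * (ε * (π / τ) * (ε * (b - a))) ≤ π ^ 2 / 4 * (P.prod P).real T := by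
        gcongr
        exact (ENNReal.ofReal_le_iff_le_toReal (measure_ne_top _ _)).mp hPT
    _ ≤ _ := mul_meas_ge_le_integral_of_nonneg (ae_of_all _ fun _ => phaseDistSq_nonneg _)
        (integrable_xiFn t _) _

lemma forall_le_of_pos_of_lt_iInf {α : Type*} {s : Set α} {f : α → ℝ} {ε : ℝ} (hε : 0 < ε)
    (h : ε < ⨅ y : s, f y) : ∀ y ∈ s, ε ≤ f y := by
  intro y hy
  have hbdd : BddBelow (Set.range fun y : s => f y) := by
    by_contra hunbdd
    rw [Real.iInf_of_not_bddBelow hunbdd] at h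
    linarith
  exact h.le.trans (ciInf_le hbdd ⟨y, hy⟩)

theorem condStar_of_density_lower_bound_general
    (d : ℕ)
    (Ps : ℕ → Set (Measure (Ed d)))
    (hprob : ∀ n, ∀ P ∈ Ps n, IsProbabilityMeasure P)
    (cL cU ε : ℝ) (hLU : cL < cU) (hε : 0 < ε) (j : Fin d)
    (hdens : ∀ n, 1 ≤ n → ∀ P ∈ Ps n, ∃ f : ℝ → ℝ, Measurable f ∧
      (∀ A : Set ℝ, MeasurableSet A →
        (P {x : Ed d | x j ∈ Set.Icc cL cU ∩ A}).toReal =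
          ∫ y in Set.Icc cL cU ∩ A, f y) ∧
      ε < ⨅ y : Set.Icc cL cU, f y)
    (R : ℝ) :
    ∃ cR : ℝ, 0 < cR ∧ ∀ n, 1 ≤ n → ∀ P ∈ Ps n, condStar P R cR := by
  have hwidth : 0 < cU - cL := sub_pos.mpr hLU
  obtain ⟨τ, hτR, hτgap⟩ : ∃ τ, R < τ ∧ 3 * π / (cU - cL) < τ :=
    (exists_gt (max R (3 * π / (cU - cL)))).imp fun _ => max_lt_iff.mp
  have hτ : 0 < τ := lt_trans (by positivity) hτgap
  have hgap : 3 * π ≤ τ * (cU - cL) := by linarith [(div_lt_iff₀ hwidth).mp hτgap]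
  refine ⟨(2 * π ^ 2)⁻¹ * (π ^ 2 / 4 * (ε * (π / τ) * (ε * (cU - cL)))), by positivity,
    fun n hn P hP => ?_⟩
  have := hprob n P hP
  obtain ⟨f, hf, hfdens, hfε⟩ := hdens n hn P hP
  have hcoord : ∀ S ⊆ Set.Icc cL cU, MeasurableSet S →
      ENNReal.ofReal ε * volume S ≤ P {x | x j ∈ S} := fun S hSI hS =>
    ofReal_mul_volume_le_of_density P (fun x : Ed d => x j) (by simp [Real.volume_Icc]) hf hfdens
      (forall_le_of_pos_of_lt_iInf hε hfε) hS hSI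
  have ht : R < ‖EuclideanSpace.single j τ‖ := by
    rwa [PiLp.norm_single, Real.norm_eq_abs, abs_of_pos hτ]
  exact condStar_of_le_integral_xiFn P ht <| mul_le_mul_of_nonneg_left
    (le_integral_xiFn_single P hε.le hτ hgap hcoord) (by positivity)

/-- **Proposition 3.2(ii).** If for each `P ∈ 𝒫ₙ` the law of the j-th coordinate restricted
to `[c_L, c_U]` has a density `f_{j,P}` bounded below on `[c_L, c_U]` by more than ε, then
condition (★) holds for some `c_R > 0`: for all `n ≥ 1` and all `P ∈ 𝒫ₙ`,
`c_R ≤ sup_{‖t‖>R} (1/(2π²)) E_P[inf_{q∈ℤ}(t'(X₁−X₂) − 2πq)²]`. -/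
theorem condStar_of_density_lower_bound
    (d : ℕ) (hd : 1 ≤ d)
    (Ps : ℕ → Set (Measure (Ed d)))
    (hprob : ∀ n, ∀ P ∈ Ps n, IsProbabilityMeasure P)
    (cL cU ε : ℝ) (hLU : cL < cU) (hε : 0 < ε) (j : Fin d)
    (hdens : ∀ n, 1 ≤ n → ∀ P ∈ Ps n, ∃ f : ℝ → ℝ, Measurable f ∧
      (∀ A : Set ℝ, MeasurableSet A →
        (P {x : Ed d | x j ∈ Set.Icc cL cU ∩ A}).toReal =
          ∫ y in Set.Icc cL cU ∩ A, f y) ∧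
      ε < ⨅ y : Set.Icc cL cU, f y)
    (R : ℝ) (hR : 0 < R) :
    ∃ cR : ℝ, 0 < cR ∧ ∀ n, 1 ≤ n → ∀ P ∈ Ps n, condStar P R cR :=
  condStar_of_density_lower_bound_general d Ps hprob cL cU ε hLU hε j hdens R
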